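/- arXiv:math/0209133 — 2 statements merged into one kernel-verified Lean document; each statement's English description precedes it below -/
import Mathlib

section
/- Let l be a Lyndon word of length ≥ 2 and let l = l_1 l_2 be its co-standard factorization, i.e. l_1 is the longest proper nonempty left factor of l which is a Lyndon word and l_2 is the complementary right factor. Then l_2 = l_1^k · f · x for some integer k ≥ 0, some (possibly empty) proper left factor f of l_1, and some letter x such that f·x > l_1 lexicographically. In particular, l_2 is also a Lyndon word. -/
/-- Lexicographic order on words over a linearly ordered alphabet
(a proper left factor is smaller than the word). -/
def wlt {α : Type*} [LinearOrder α] (w x : List α) : Prop := List.Lex (· < ·) w x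

/-- A nonempty word is Lyndon if it is lexicographically smaller than every proper
nonempty right factor (suffix) of itself. -/
def IsLyndon {α : Type*} [LinearOrder α] (l : List α) : Prop :=
  l ≠ [] ∧ ∀ u v : List α, l = u ++ v → u ≠ [] → v ≠ [] → wlt l v

/-!
Write `l₂ = l₁ᵏ r` with `r` not beginning with `l₁`. As a proper suffix of the Lyndon word `l`,
`r` is neither empty nor a prefix of `l₁`, and `l₁ < r`; so `l₁ = f y t` and `r = f x r'` with
`y < x`. Raising the letter that follows a prefix of a Lyndon word yields a Lyndon word `f x`,
and `u v` is Lyndon whenever `u < v` are, hence `l₁ᵐ f x` is Lyndon for every `m`. Maximality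
of `l₁` applied to the Lyndon prefix `l₁ᵏ⁺¹ f x` of `l` forces `r' = []`.
-/

namespace List

section

variable {α : Type*}

theorem exists_eq_flatten_replicate_append_not_prefix {u : List α} (hu : u ≠ []) (s : List α) :
    ∃ k r, s = (replicate k u).flatten ++ r ∧ ¬ u <+: r := by
  by_cases h : u <+: s
  · obtain ⟨s', rfl⟩ := h
    have : s'.length < (u ++ s').length := by simpa using length_pos_iff.mpr hu
    obtain ⟨k, r, rfl, hr⟩ := exists_eq_flatten_replicate_append_not_prefix hu s'
    exact ⟨k + 1, r, by simp [replicate_succ], hr⟩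
  · exact ⟨0, s, rfl, h⟩
termination_by s.length

end

variable {α : Type*} [LinearOrder α] {s t : List α}

theorem exists_eq_append_cons_of_lt_of_not_prefix (h : s < t) (hst : ¬ s <+: t) :
    ∃ p a s' b t', a < b ∧ s = p ++ a :: s' ∧ t = p ++ b :: t' := by
  induction h with
  | nil => exact absurd nil_prefix hst
  | @cons c s t _ ih =>
    obtain ⟨p, a, s', b, t', hab, rfl, rfl⟩ := ih fun h => hst (cons_prefix_cons.mpr ⟨rfl, h⟩)
    exact ⟨c :: p, a, s', b, t', hab, rfl, rfl⟩
  | @rel a s b t hab => exact ⟨[], a, s, b, t, hab, rfl, rfl⟩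

theorem append_lt_append_of_lt_of_not_prefix (h : s < t) (hst : ¬ s <+: t) (u v : List α) :
    s ++ u < t ++ v := by
  obtain ⟨p, a, s', b, t', hab, rfl, rfl⟩ := exists_eq_append_cons_of_lt_of_not_prefix h hst
  simpa only [append_assoc, cons_append] using append_left_lt (Lex.rel hab)

theorem lt_append_of_ne_nil (s : List α) (ht : t ≠ []) : s < s ++ t := by
  obtain ⟨a, t, rfl⟩ := exists_cons_of_ne_nil ht
  simpa using Lex.append_left _ (Lex.nil : Lex (· < ·) [] (a :: t)) s

theorem le_of_prefix_of_prefix_of_lt {p q : List α} (h : s < t) (hp : p <+: s) (hq : q <+: t)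
    (hpq : p.length = q.length) : p ≤ q := by
  refine le_of_not_gt fun hqp => ?_
  have hqp' : ¬ q <+: p := fun hpre => hqp.ne (hpre.eq_of_length hpq.symm)
  obtain ⟨s', rfl⟩ := hp
  obtain ⟨t', rfl⟩ := hq
  exact lt_asymm h (append_lt_append_of_lt_of_not_prefix hqp hqp' t' s')

end List

theorem wlt_iff_lt {α : Type*} [LinearOrder α] {s t : List α} : wlt s t ↔ s < t := Iff.rfl

namespace IsLyndon

open List

variable {α : Type*} [LinearOrder α] {l u v : List α}

theorem lt_of_eq_append (hl : IsLyndon l) (h : l = u ++ v) (hu : u ≠ []) (hv : v ≠ []) :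
    l < v :=
  hl.2 u v h hu hv

theorem append_lt_append (hl : IsLyndon l) (h : l = u ++ v) (hu : u ≠ []) (hv : v ≠ [])
    (w w' : List α) : l ++ w < v ++ w' := by
  refine append_lt_append_of_lt_of_not_prefix (hl.lt_of_eq_append h hu hv) (fun hpre => ?_) w w'
  exact hu (by simpa [h] using hpre.length_le)

theorem not_prefix_of_eq_append (hl : IsLyndon l) (h : l = u ++ v) (hu : u ≠ []) (hv : v ≠ []) :
    ¬ v <+: l :=
  fun hpre => hpre.le (hl.lt_of_eq_append h hu hv)

theorem append_singleton_of_lt {f t : List α} {x y : α} (hu : IsLyndon (f ++ y :: t))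
    (hyx : y < x) : IsLyndon (f ++ [x]) := by
  refine ⟨by simp, fun a b hab ha hb => wlt_iff_lt.mpr ?_⟩
  obtain ⟨g, x', rfl⟩ := (eq_nil_or_concat b).resolve_left hb
  obtain ⟨rfl, rfl⟩ : f = a ++ g ∧ x = x' := by simpa [← append_assoc] using hab
  have hsuf : a ++ g ++ y :: t < g ++ y :: t :=
    hu.lt_of_eq_append (append_assoc _ _ _) ha (by simp)
  -- compare the prefixes of length `|g| + 1` of `a g y t` and of its suffix `g y t`
  obtain ⟨f₁, f₂, hf, hf₁⟩ : ∃ f₁ f₂, a ++ g = f₁ ++ f₂ ∧ f₁.length = (g ++ [x]).length :=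
    ⟨_, _, (take_append_drop (g.length + 1) _).symm, by simp [length_pos_iff.mpr ha]⟩
  rw [hf] at hsuf ⊢
  have hle : f₁ ≤ g ++ [y] :=
    le_of_prefix_of_prefix_of_lt hsuf (by simp [append_assoc]) ⟨t, by simp⟩ (by simpa using hf₁)
  have hlt : f₁ < g ++ [x] := hle.trans_lt (append_left_lt (Lex.rel hyx))
  have hnp : ¬ f₁ <+: g ++ [x] := fun hpre => hlt.ne (hpre.eq_of_length hf₁)
  simpa using append_lt_append_of_lt_of_not_prefix hlt hnp (f₂ ++ [x]) []

theorem append_of_lt (hu : IsLyndon u) (hv : IsLyndon v) (huv : u < v) : IsLyndon (u ++ v) := by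
  have huv_lt_v : u ++ v < v := by
    by_cases hp : u <+: v
    · obtain ⟨w, rfl⟩ := hp
      have hw : w ≠ [] := by rintro rfl; simp at huv
      exact append_left_lt (hv.lt_of_eq_append rfl hu.1 hw)
    · simpa using append_lt_append_of_lt_of_not_prefix huv hp v []
  refine ⟨by simp [hu.1], fun a b hab ha hb => wlt_iff_lt.mpr ?_⟩
  rcases append_eq_append_iff.mp hab with ⟨c, rfl, rfl⟩ | ⟨c, rfl, rfl⟩
  · rcases eq_or_ne c [] with rfl | hc
    · simpa using huv_lt_v
    · exact huv_lt_v.trans (hv.lt_of_eq_append rfl hc hb)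
  · rcases eq_or_ne c [] with rfl | hc
    · simpa using huv_lt_v
    · exact hu.append_lt_append rfl ha hc v v

theorem flatten_replicate_append {w : List α} (hu : IsLyndon u) (hw : IsLyndon w) (huw : u < w) :
    ∀ m, IsLyndon ((replicate m u).flatten ++ w)
  | 0 => by simpa using hw
  | m + 1 => by
    have hlt : u < (replicate m u).flatten ++ w := by
      cases m with
      | zero => simpa using huw
      | succ m => simpa [replicate_succ] using lt_append_of_ne_nil u (by simp [hw.1])
    simpa [replicate_succ] using hu.append_of_lt (flatten_replicate_append hu hw huw m) hlt

end IsLyndon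

open List

theorem costandard_factorization_structure_general {α : Type*} [LinearOrder α]
    (l l₁ l₂ : List α) (hLy : IsLyndon l)
    (hsplit : l = l₁ ++ l₂) (h1ne : l₁ ≠ []) (h2ne : l₂ ≠ [])
    (h1Ly : IsLyndon l₁)
    (h1long : ∀ u v : List α, l = u ++ v → u ≠ [] → v ≠ [] → IsLyndon u →
      u.length ≤ l₁.length) :
    IsLyndon l₂ ∧
    ∃ (k : ℕ) (f : List α) (x : α),
      f <+: l₁ ∧ f ≠ l₁ ∧ wlt l₁ (f ++ [x]) ∧
      l₂ = (List.replicate k l₁).flatten ++ f ++ [x] := by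
  obtain ⟨k, r, rfl, hr⟩ := exists_eq_flatten_replicate_append_not_prefix h1ne l₂
  have hl : l = (l₁ ++ (replicate k l₁).flatten) ++ r := by rw [hsplit, append_assoc]
  have hr_ne : r ≠ [] := by
    rintro rfl
    refine hLy.not_prefix_of_eq_append hsplit h1ne h2ne ⟨l₁, ?_⟩
    simp [hsplit, ← flatten_concat, ← replicate_succ', replicate_succ]
  have hlr : l < r := hLy.lt_of_eq_append hl (by simp [h1ne]) hr_ne
  have hrl₁ : ¬ r <+: l₁ := fun h =>
    hLy.not_prefix_of_eq_append hl (by simp [h1ne]) hr_ne (h.trans (hsplit ▸ prefix_append _ _))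
  have hl₁r : l₁ < r := by
    refine lt_of_not_ge fun hrl => ?_
    rcases hrl.lt_or_eq with hrl | rfl
    · exact lt_asymm hlr (by simpa [hsplit] using append_lt_append_of_lt_of_not_prefix hrl hrl₁ [] _)
    · exact hrl₁ (prefix_refl _)
  obtain ⟨f, y, t, x, r', hyx, rfl, rfl⟩ := exists_eq_append_cons_of_lt_of_not_prefix hl₁r hr
  have hl₁fx : f ++ y :: t < f ++ [x] := append_left_lt (Lex.rel hyx)
  have hpow := h1Ly.flatten_replicate_append (h1Ly.append_singleton_of_lt hyx) hl₁fx
  obtain rfl : r' = [] := by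
    by_contra hr'
    have := h1long _ r' (by simp [hsplit, replicate_succ]) (by simp) hr' (hpow (k + 1))
    simp at this
    nlinarith
  exact ⟨by simpa using hpow k, k, f, x, prefix_append _ _, by simp, hl₁fx, by simp⟩

/-- Lemma 3.1: if `l = l₁ l₂` is the co-standard factorization of a Lyndon word `l`
(`l₁` the longest proper nonempty Lyndon left factor), then `l₂ = l₁^k · f · x` for some
`k ≥ 0`, some proper left factor `f` of `l₁` (possibly empty) and a letter `x` with
`f·x > l₁`; in particular `l₂` is a Lyndon word. -/
theorem costandard_factorization_structure {α : Type*} [LinearOrder α] [Fintype α]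
    (l l₁ l₂ : List α) (hLy : IsLyndon l) (hlen : 2 ≤ l.length)
    (hsplit : l = l₁ ++ l₂) (h1ne : l₁ ≠ []) (h2ne : l₂ ≠ [])
    (h1Ly : IsLyndon l₁)
    (h1long : ∀ u v : List α, l = u ++ v → u ≠ [] → v ≠ [] → IsLyndon u →
      u.length ≤ l₁.length) :
    IsLyndon l₂ ∧
    ∃ (k : ℕ) (f : List α) (x : α),
      f <+: l₁ ∧ f ≠ l₁ ∧ wlt l₁ (f ++ [x]) ∧
      l₂ = (List.replicate k l₁).flatten ++ f ++ [x] :=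
  costandard_factorization_structure_general l l₁ l₂ hLy hsplit h1ne h2ne h1Ly h1long
end

section
/- Let l be a Lyndon word and let w be a word with w ≤ l lexicographically. Then every interleaving of l and w is lexicographically ≤ l·w, and l·w itself is an interleaving of l and w; that is, l·w is the largest word occurring in the shuffle product of l and w. -/
def wle {α : Type*} [LinearOrder α] (w x : List α) : Prop := wlt w x ∨ w = x

/-- `Interleave u v z` : the word `z` is an interleaving (a term of the shuffle product)
of the words `u` and `v`. -/
inductive Interleave {α : Type*} : List α → List α → List α → Prop
  | nil : Interleave [] [] []
  | left {u v z : List α} {a : α} : Interleave u v z → Interleave (a :: u) v (a :: z)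
  | right {u v z : List α} {a : α} : Interleave u v z → Interleave u (a :: v) (a :: z)

/-
Write `P k` for the prefix of length `k` of `l`. The core fact is that for `i + j ≤ |l|` every
interleaving of `P i` and `P j` is at most `P (i + j)`, and is `l` itself only if `i = 0` or
`j = 0`. It is proved by strong induction on `i + j`, with `P i` generalised to the prefix of a
suffix `s` of `l`. An interleaving that starts with a letter of `s` is handled by recursing on
the tail of `s`. One that starts with the first letter of `l` is compared with `l`, which is
`≤ s` as `l` is Lyndon: on the longest common prefix of `l` and `s` the induction hypothesis,
with the two words exchanged, bounds it by `l`; either that prefix covers all `i + j` letters,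
or the letter where `s` exceeds `l` makes the inequality strict.

For the theorem, the first `|l|` letters of an interleaving of `l` and `w` interleave some `P i`
with the prefix of length `j` of `w`, which is `≤ P j`; so they are at most `l`, and when they
equal `l` the core fact leaves only the cases `j = 0` and `i = 0`, `w = l`.
-/

open List

section

variable {α : Type*}

theorem List.take_eq_take_of_take_eq {x y : List α} {m n : ℕ} (h : x.take n = y.take n)
    (hmn : m ≤ n) : x.take m = y.take m := by
  simpa [take_take, Nat.min_eq_left hmn] using congrArg (take m) h

theorem List.take_length_succ_of_take_eq {x p u : List α} {b : α} {n : ℕ}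
    (h : x.take n = p ++ b :: u) : x.take (p.length + 1) = p ++ [b] := by
  have hn : p.length + 1 ≤ n := by
    have := congrArg length h
    simp only [length_take, length_append, length_cons] at this
    omega
  calc x.take (p.length + 1)
      _ = (x.take n).take (p.length + 1) := by rw [take_take, Nat.min_eq_left hn]
      _ = p ++ [b] := by simp [h, take_append]

section ListOrder

variable [LinearOrder α]

theorem wle_iff_le {w x : List α} : wle w x ↔ w ≤ x := or_comm

theorem List.le_of_isPrefix {x y : List α} (h : x <+: y) : x ≤ y := not_lt.1 h.le

theorem List.take_le_take_of_le {x y : List α} (h : x ≤ y) (n : ℕ) :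
    x.take n ≤ y.take n := by
  rcases h with rfl | h
  · exact le_rfl
  induction h generalizing n with
  | nil => simpa using le_of_isPrefix (nil_prefix (l := take n _))
  | rel hab =>
    cases n
    · exact le_rfl
    · exact le_of_lt (Lex.rel hab)
  | cons _ ih =>
    cases n
    · exact le_rfl
    · exact cons_le_cons _ (ih _)

theorem List.exists_append_cons_of_lt_of_length_eq {x y : List α} (h : x < y)
    (hlen : x.length = y.length) :
    ∃ p a b u v, a < b ∧ x = p ++ a :: u ∧ y = p ++ b :: v := by
  induction h with
  | nil => simp at hlen
  | @rel a u b v hab => exact ⟨[], a, b, u, v, hab, rfl, rfl⟩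
  | @cons a u v _ ih =>
    obtain ⟨p, b, c, u', v', hbc, rfl, rfl⟩ := ih (by simpa using hlen)
    exact ⟨a :: p, b, c, u', v', hbc, rfl, rfl⟩

theorem List.append_lt_append_of_lt_of_length_eq {x y : List α} (h : x < y)
    (hlen : x.length = y.length) (u v : List α) : x ++ u < y ++ v := by
  obtain ⟨p, a, b, x', y', hab, rfl, rfl⟩ := exists_append_cons_of_lt_of_length_eq h hlen
  simpa using append_left_lt (l₁ := p) (Lex.rel (l₁ := x' ++ u) (l₂ := y' ++ v) hab)

theorem List.lt_of_take_lt_take {x y : List α} {n : ℕ} (h : x.take n < y.take n)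
    (hx : n ≤ x.length) (hy : n ≤ y.length) : x < y := by
  rw [← take_append_drop n x, ← take_append_drop n y]
  exact append_lt_append_of_lt_of_length_eq h (by simp only [length_take]; omega) _ _

end ListOrder

namespace Interleave

theorem symm {u v x : List α} (h : Interleave u v x) : Interleave v u x := by
  induction h with
  | nil => exact nil
  | left _ ih => exact right ih
  | right _ ih => exact left ih

theorem nil_left : ∀ v : List α, Interleave [] v v
  | [] => nil
  | _ :: v => right (nil_left v)

theorem append_self : ∀ u v : List α, Interleave u v (u ++ v)
  | [], v => nil_left v
  | _ :: u, v => left (append_self u v)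

theorem eq_of_nil_left {v x : List α} (h : Interleave [] v x) : x = v := by
  induction x generalizing v with
  | nil => cases h; rfl
  | cons a x ih => cases h with | right h => rw [ih h]

theorem eq_of_nil_right {u x : List α} (h : Interleave u [] x) : x = u :=
  eq_of_nil_left h.symm

theorem length_eq {u v x : List α} (h : Interleave u v x) :
    x.length = u.length + v.length := by
  induction h with
  | nil => rfl
  | left _ ih => simp only [length_cons, ih]; omega
  | right _ ih => simp only [length_cons, ih]; omega

theorem exists_take_drop {u v x : List α} (h : Interleave u v x) {n : ℕ} (hn : n ≤ x.length) :
    ∃ m k, m ≤ u.length ∧ k ≤ v.length ∧ m + k = n ∧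
      Interleave (u.take m) (v.take k) (x.take n) ∧
      Interleave (u.drop m) (v.drop k) (x.drop n) := by
  induction h generalizing n with
  | nil => exact ⟨0, 0, le_rfl, le_rfl, by simp_all, by simpa using nil, by simpa using nil⟩
  | @left u v z a h ih =>
    cases n with
    | zero => exact ⟨0, 0, by simp, by simp, rfl, nil, by simpa using left h⟩
    | succ n =>
      obtain ⟨m, k, hm, hk, rfl, ht, hd⟩ := ih (by simpa using hn)
      exact ⟨m + 1, k, by simpa using hm, hk, by omega, by simpa using left ht,
        by simpa using hd⟩
  | @right u v z a h ih =>
    cases n with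
    | zero => exact ⟨0, 0, by simp, by simp, rfl, nil, by simpa using right h⟩
    | succ n =>
      obtain ⟨m, k, hm, hk, rfl, ht, hd⟩ := ih (by simpa using hn)
      exact ⟨m, k + 1, hm, by simpa using hk, by omega, by simpa using right ht,
        by simpa using hd⟩

theorem exists_le_of_le [LinearOrder α] {u v x : List α} (h : Interleave u v x) {v' : List α}
    (hv : v ≤ v') : ∃ x', Interleave u v' x' ∧ x ≤ x' := by
  induction h generalizing v' with
  | nil => exact ⟨v', nil_left v', le_of_isPrefix nil_prefix⟩
  | left _ ih =>
    obtain ⟨x', hx', hle⟩ := ih hv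
    exact ⟨_, left hx', cons_le_cons _ hle⟩
  | @right u v z b h ih =>
    rcases hv with rfl | hv
    · exact ⟨_, right h, le_rfl⟩
    cases hv with
    | @rel _ _ b' v'' hbb' =>
      exact ⟨b' :: (u ++ v''), right (append_self u v''), le_of_lt (Lex.rel hbb')⟩
    | cons hv =>
      obtain ⟨x', hx', hle⟩ := ih (le_of_lt hv)
      exact ⟨_, right hx', cons_le_cons _ hle⟩

end Interleave

namespace IsLyndon

variable [LinearOrder α] {l s : List α}

theorem le_of_isSuffix (hl : IsLyndon l) (hs : s <:+ l) (hs₀ : s ≠ []) : l ≤ s := by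
  obtain ⟨u, rfl⟩ := hs
  rcases eq_or_ne u [] with rfl | hu
  · exact le_rfl
  · exact le_of_lt (hl.2 u s rfl hu hs₀)

theorem eq_of_isSuffix_of_isPrefix (hl : IsLyndon l) (hs : s <:+ l) (hp : s <+: l)
    (hs₀ : s ≠ []) : s = l :=
  le_antisymm (le_of_isPrefix hp) (hl.le_of_isSuffix hs hs₀)

/-- The step of `interleave_take_le` for an interleaving that starts with the first letter of
`l = a :: l'`; `ih` is the induction hypothesis, for the suffix `l'`. -/
theorem cons_interleave_take_le {a : α} {l' x : List α} (hl : IsLyndon (a :: l'))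
    (hs : s <:+ a :: l') {i j : ℕ} (hi : 0 < i) (hij : i + j < s.length)
    (ih : ∀ m k y, m + k ≤ i + j → Interleave (l'.take m) ((a :: l').take k) y →
      y ≤ l'.take (m + k) ∧ (y = l' → k = 0))
    (hx : Interleave (s.take i) (l'.take j) x) :
    a :: x ≤ s.take (i + j + 1) ∧ a :: x ≠ s := by
  have hs₀ : s ≠ [] := by rintro rfl; simp at hij
  have hlen : s.length ≤ l'.length + 1 := by simpa using hs.length_le
  have hxlen : x.length = i + j := by rw [hx.length_eq]; simp only [length_take]; omega
  rcases (take_le_take_of_le (hl.le_of_isSuffix hs hs₀) (i + j + 1)).eq_or_lt with heq | hlt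
  · have hsi : s.take i = (a :: l').take i := take_eq_take_of_take_eq heq.symm (by omega)
    obtain ⟨hle, hne⟩ := ih j i x (by omega) (hsi ▸ hx).symm
    refine ⟨?_, fun hxs => ?_⟩
    · rw [← heq, take_succ_cons, add_comm i j]
      exact cons_le_cons a hle
    · have hsp : s <+: a :: l' := by
        rw [← take_of_length_le (l := s) (i := i + j + 1) (by simp [← hxs, hxlen]), ← heq]
        exact take_prefix _ _
      rw [hl.eq_of_isSuffix_of_isPrefix hs hsp hs₀, cons.injEq] at hxs
      exact hi.ne' (hne hxs.2)
  · obtain ⟨p, b, c, u, v, hbc, hq, ht⟩ := exists_append_cons_of_lt_of_length_eq hlt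
      (by simp only [length_take, length_cons]; omega)
    have hd : p.length ≤ i + j := by
      have := congrArg length ht
      simp only [length_take, length_append, length_cons] at this
      omega
    obtain ⟨m, k, hm, hk, hmk, hxd, -⟩ := hx.exists_take_drop (n := p.length) (by omega)
    replace hq := take_length_succ_of_take_eq hq
    replace ht := take_length_succ_of_take_eq ht
    have hsq : s.take p.length = (a :: l').take p.length :=
      calc s.take p.length
          _ = (s.take (p.length + 1)).take p.length := by
            rw [take_take, Nat.min_eq_left (Nat.le_succ _)]
          _ = ((a :: l').take (p.length + 1)).take p.length := by simp [hq, ht]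
          _ = (a :: l').take p.length := by rw [take_take, Nat.min_eq_left (Nat.le_succ _)]
    simp only [take_take, length_take] at hxd hm hk
    rw [Nat.min_eq_left (by omega : m ≤ i), take_eq_take_of_take_eq hsq
      (by omega : m ≤ p.length), Nat.min_eq_left (by omega : k ≤ j)] at hxd
    obtain ⟨hle, -⟩ := ih k m _ (by omega) hxd.symm
    have hpre : (a :: x).take (p.length + 1) < (s.take (i + j + 1)).take (p.length + 1) :=
      calc (a :: x).take (p.length + 1)
          _ = a :: x.take p.length := take_succ_cons
          _ ≤ a :: l'.take p.length := cons_le_cons a (by rwa [add_comm k m, hmk] at hle)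
          _ = p ++ [b] := by rw [← take_succ_cons, hq]
          _ < p ++ [c] := append_left_lt (Lex.rel hbc)
          _ = (s.take (i + j + 1)).take (p.length + 1) := by
            rw [take_take, Nat.min_eq_left (by omega), ht]
    have hlt' : a :: x < s.take (i + j + 1) :=
      lt_of_take_lt_take hpre (by simp only [length_cons]; omega)
        (by simp only [length_take]; omega)
    exact ⟨le_of_lt hlt', ne_of_lt (lt_of_lt_of_le hlt' (le_of_isPrefix (take_prefix _ _)))⟩

theorem interleave_take_le (hl : IsLyndon l) (hs : s <:+ l) {i j : ℕ} (hij : i + j ≤ s.length)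
    {x : List α} (hx : Interleave (s.take i) (l.take j) x) :
    x ≤ s.take (i + j) ∧ (x = s → j = 0 ∨ s = l ∧ i = 0) := by
  obtain ⟨a, l', rfl⟩ := exists_cons_of_ne_nil hl.1
  have hlen : s.length ≤ l'.length + 1 := by simpa using hs.length_le
  induction hn : i + j using Nat.strong_induction_on generalizing s i j x with
  | _ n ih =>
  subst hn
  rcases j with _ | j
  · rw [take_zero] at hx
    simp [hx.eq_of_nil_right]
  have hs₀ : s ≠ [] := by rintro rfl; simp at hij
  rcases i with _ | i
  · rw [take_zero] at hx
    rw [zero_add, hx.eq_of_nil_left]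
    refine ⟨take_le_take_of_le (hl.le_of_isSuffix hs hs₀) _, fun hxs => Or.inr ⟨?_, rfl⟩⟩
    exact hl.eq_of_isSuffix_of_isPrefix hs (hxs ▸ take_prefix _ _) hs₀
  obtain ⟨c, s', rfl⟩ := exists_cons_of_ne_nil hs₀
  rw [take_succ_cons, take_succ_cons] at hx
  rcases hx with _ | ⟨hx⟩ | ⟨hx⟩
  · have hs' : s' <:+ a :: l' := (suffix_cons c s').trans hs
    obtain ⟨hle, heq⟩ := ih (i + (j + 1)) (by omega) (by simp at hij; omega) hs' hx
      (by simp at hlen ⊢; omega) rfl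
    rw [show i + 1 + (j + 1) = i + (j + 1) + 1 by omega, take_succ_cons]
    refine ⟨cons_le_cons c hle, fun hxs => ?_⟩
    rcases heq (cons.inj hxs).2 with h | ⟨rfl, -⟩
    · omega
    · simp at hlen
  · have ih' : ∀ m k y, m + k ≤ i + 1 + j → Interleave (l'.take m) ((a :: l').take k) y →
        y ≤ l'.take (m + k) ∧ (y = l' → k = 0) := by
      intro m k y hmk hy
      obtain ⟨hle, heq⟩ := ih (m + k) (by omega) (by simp at hij hlen; omega)
        (suffix_cons a l') hy (by simp) rfl
      exact ⟨hle, fun h => (heq h).resolve_right fun h' => cons_ne_self a l' h'.1.symm⟩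
    obtain ⟨hle, hne⟩ := hl.cons_interleave_take_le hs (Nat.succ_pos i)
      (by simp at hij ⊢; omega) ih' (by rwa [take_succ_cons])
    rw [show i + 1 + (j + 1) = i + 1 + j + 1 by omega]
    exact ⟨hle, fun h => absurd h hne⟩

theorem interleave_le_append (hl : IsLyndon l) {w z : List α} (hw : w ≤ l)
    (hz : Interleave l w z) : z ≤ l ++ w := by
  have hzlen : l.length ≤ z.length := by rw [hz.length_eq]; omega
  obtain ⟨i, j, -, hj, hij, hx, hy⟩ := hz.exists_take_drop hzlen
  obtain ⟨x', hx', hle⟩ := hx.exists_le_of_le (take_le_take_of_le hw j)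
  obtain ⟨hx'l, hx'eq⟩ := hl.interleave_take_le suffix_rfl (by omega) hx'
  rw [hij, take_length] at hx'l
  rw [← take_append_drop l.length z]
  rcases (hle.trans hx'l).eq_or_lt with heq | hlt
  · rw [heq]
    rcases hx'eq (le_antisymm hx'l (heq ▸ hle)) with rfl | ⟨-, rfl⟩
    · rw [add_zero] at hij
      rw [hij, drop_length, drop_zero] at hy
      rw [hy.eq_of_nil_left]
    · rw [take_zero] at hx
      rw [zero_add] at hij
      subst hij
      have hwl : w = l := le_antisymm hw <| le_of_isPrefix <| by
        rw [← heq, hx.eq_of_nil_left]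
        exact take_prefix _ _
      subst hwl
      rw [drop_zero, drop_length] at hy
      rw [hy.eq_of_nil_right]
  · exact le_of_lt <|
      append_lt_append_of_lt_of_length_eq hlt (by simp only [length_take]; omega) _ _

end IsLyndon

end

theorem lyndon_shuffle_max_general {α : Type*} [LinearOrder α]
    (l w : List α) (hl : IsLyndon l) (hw : wle w l) :
    (∀ z : List α, Interleave l w z → wle z (l ++ w)) ∧ Interleave l w (l ++ w) :=
  ⟨fun _ hz => wle_iff_le.2 (hl.interleave_le_append (wle_iff_le.1 hw) hz),
    Interleave.append_self l w⟩

/-- Lemma 3.2: if `l` is a Lyndon word and `w ≤ l`, then every interleaving of `l` and `w`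
is `≤ l·w`, and `l·w` is itself an interleaving of `l` and `w`; i.e. `l·w` is the largest
word occurring in the shuffle product of `l` and `w`. -/
theorem lyndon_shuffle_max {α : Type*} [LinearOrder α] [Fintype α]
    (l w : List α) (hl : IsLyndon l) (hw : wle w l) :
    (∀ z : List α, Interleave l w z → wle z (l ++ w)) ∧ Interleave l w (l ++ w) :=
  lyndon_shuffle_max_general l w hl hw
end
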